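/- Let d ≥ 2. There exists a constant C > 0 (depending only on d) such that for every r ∈ [1,∞), all smooth functions a, f : 𝕋^d → ℝ, and every positive integer σ: | ‖a · f(σ·)‖_{Lʳ(𝕋^d)} − ‖a‖_{Lʳ(𝕋^d)} ‖f‖_{Lʳ(𝕋^d)} | ≤ C σ^{−1/r} ‖a‖_{C¹(𝕋^d)} ‖f‖_{Lʳ(𝕋^d)}, where f(σ·) denotes the function x ↦ f(σx). -/

import Mathlib

open MeasureTheory

noncomputable section

/-! The torus `𝕋^d = ℝ^d/ℤ^d` is modelled by `ℤ^d`-periodic functions on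
`EuclideanSpace ℝ (Fin d)`, integrating over the fundamental domain `[0,1]^d`
(which has Lebesgue measure `1`). -/

/-- The fundamental domain `[0,1]^d`. -/
def QD (d : ℕ) : Set (EuclideanSpace ℝ (Fin d)) := {x | ∀ i, x i ∈ Set.Icc (0:ℝ) 1}

/-- Lebesgue (Haar) measure on `𝕋^d`, of total mass `1`. -/
def μTD (d : ℕ) : Measure (EuclideanSpace ℝ (Fin d)) := volume.restrict (QD d)

/-- `ℤ^d`-periodicity. -/
def PeriodicD {d : ℕ} (f : EuclideanSpace ℝ (Fin d) → ℝ) : Prop :=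
  ∀ (x : EuclideanSpace ℝ (Fin d)) (k : Fin d → ℤ),
    f (x + (EuclideanSpace.equiv (Fin d) ℝ).symm (fun i => (k i : ℝ))) = f x

/-- The `C¹` norm `sup |a| + sup |∇a|` of a smooth periodic function. -/
def C1NormD {d : ℕ} (a : EuclideanSpace ℝ (Fin d) → ℝ) : ℝ :=
  (⨆ x, |a x|) + ⨆ x, ‖fderiv ℝ a x‖

open scoped NNReal ENNReal

set_option maxHeartbeats 2000000

lemma lip_rpow {r M : ℝ} (hr : 1 ≤ r) {s t : ℝ}
    (hs : s ∈ Set.Icc (0:ℝ) M) (ht : t ∈ Set.Icc (0:ℝ) M) :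
    |s ^ r - t ^ r| ≤ r * M ^ (r - 1) * |s - t| := by
  have hr0 : (0:ℝ) ≤ r := le_trans zero_le_one hr
  have hC : ∀ x ∈ Set.Icc (0:ℝ) M, ‖deriv (fun x : ℝ => x ^ r) x‖ ≤ r * M ^ (r - 1) := by
    intro x hx
    rw [Real.deriv_rpow_const x r, Real.norm_eq_abs, abs_mul,
      abs_of_nonneg hr0, abs_of_nonneg (Real.rpow_nonneg hx.1 _)]
    exact mul_le_mul_of_nonneg_left
      (Real.rpow_le_rpow hx.1 hx.2 (by linarith)) hr0
  have hd : ∀ x ∈ Set.Icc (0:ℝ) M, DifferentiableAt ℝ (fun x : ℝ => x ^ r) x :=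
    fun x _ => (Real.hasDerivAt_rpow_const (Or.inr hr)).differentiableAt
  have := (convex_Icc (0:ℝ) M).norm_image_sub_le_of_norm_deriv_le hd hC ht hs
  simpa [Real.norm_eq_abs] using this

lemma abs_sub_rpow_le {r A B : ℝ} (hr : 1 ≤ r) (hA : 0 ≤ A) (hB : 0 ≤ B) :
    |A - B| ^ r ≤ |A ^ r - B ^ r| := by
  have key : ∀ u v : ℝ, 0 ≤ v → v ≤ u → (u - v) ^ r ≤ u ^ r - v ^ r := by
    intro u v hv hvu
    have huv : 0 ≤ u - v := by linarith
    have hnn := NNReal.add_rpow_le_rpow_add (⟨u - v, huv⟩ : ℝ≥0) (⟨v, hv⟩ : ℝ≥0) hr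
    have : ((⟨u - v, huv⟩ : ℝ≥0) + ⟨v, hv⟩) = (⟨u, by linarith⟩ : ℝ≥0) := by
      ext; simp
    replace hnn := hnn.trans_eq (congrArg (· ^ r) this)
    have := (NNReal.coe_le_coe).2 hnn
    change (u - v) ^ r + v ^ r ≤ u ^ r at this
    linarith
  rcases le_total B A with hBA | hAB
  · rw [abs_of_nonneg (by linarith : (0:ℝ) ≤ A - B),
      abs_of_nonneg (by linarith [Real.rpow_le_rpow hB hBA (le_trans zero_le_one hr)] :
        (0:ℝ) ≤ A ^ r - B ^ r)]
    exact key A B hB hBA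
  · rw [abs_of_nonpos (by linarith : A - B ≤ 0),
      abs_of_nonpos (by linarith [Real.rpow_le_rpow hA hAB (le_trans zero_le_one hr)] :
        A ^ r - B ^ r ≤ 0), neg_sub, neg_sub]
    exact key B A hA hAB

namespace ImpHolder

variable {d : ℕ}
local notation "E" => EuclideanSpace ℝ (Fin d)

/-- embed a coordinate vector -/
def ι (v : Fin d → ℝ) : E := (EuclideanSpace.equiv (Fin d) ℝ).symm v

@[simp] lemma ι_apply (v : Fin d → ℝ) (i : Fin d) : ι v i = v i := rfl

/-- closed cube -/
def ccube (l u : Fin d → ℝ) : Set E := {x | ∀ i, x i ∈ Set.Icc (l i) (u i)}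
/-- half-open cube -/
def ocube (l u : Fin d → ℝ) : Set E := {x | ∀ i, x i ∈ Set.Ico (l i) (u i)}

lemma cube_eq_preimage (J : Fin d → Set ℝ) :
    {x : E | ∀ i, x i ∈ J i} = ((MeasurableEquiv.toLp 2 (Fin d → ℝ)).symm) ⁻¹' (Set.univ.pi J) := by
  ext x
  rw [Set.mem_preimage, Set.mem_univ_pi]
  exact Iff.rfl

lemma measurableSet_cube {J : Fin d → Set ℝ} (hJ : ∀ i, MeasurableSet (J i)) :
    MeasurableSet {x : E | ∀ i, x i ∈ J i} := by
  rw [cube_eq_preimage]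
  exact ((MeasurableEquiv.toLp 2 (Fin d → ℝ)).symm).measurable (MeasurableSet.univ_pi hJ)

lemma volume_cube {J : Fin d → Set ℝ} (hJ : ∀ i, MeasurableSet (J i)) :
    (volume : Measure E) {x : E | ∀ i, x i ∈ J i} = ∏ i, volume (J i) := by
  rw [cube_eq_preimage,
    (EuclideanSpace.volume_preserving_symm_measurableEquiv_toLp (Fin d)).measure_preimage
      (MeasurableSet.univ_pi hJ).nullMeasurableSet, volume_pi_pi]

lemma measurableSet_ccube (l u : Fin d → ℝ) : MeasurableSet (ccube l u) :=
  measurableSet_cube fun _ => measurableSet_Icc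

lemma measurableSet_ocube (l u : Fin d → ℝ) : MeasurableSet (ocube l u) :=
  measurableSet_cube fun _ => measurableSet_Ico

lemma isCompact_ccube (l u : Fin d → ℝ) : IsCompact (ccube l u) := by
  have h : ccube l u =
      (EuclideanSpace.equiv (Fin d) ℝ).toHomeomorph ⁻¹' (Set.univ.pi fun i => Set.Icc (l i) (u i)) := by
    ext x
    rw [Set.mem_preimage, Set.mem_univ_pi]
    exact Iff.rfl
  rw [h]
  exact (Homeomorph.isCompact_preimage _).2 (isCompact_univ_pi fun i => isCompact_Icc)

lemma ocube_subset_ccube (l u : Fin d → ℝ) : ocube l u ⊆ ccube l u :=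
  fun x hx i => ⟨(hx i).1, (hx i).2.le⟩

lemma volume_ccube (l u : Fin d → ℝ) :
    (volume : Measure E) (ccube l u) = ∏ i, ENNReal.ofReal (u i - l i) := by
  rw [ccube, volume_cube fun _ => measurableSet_Icc]
  simp [Real.volume_Icc]

lemma volume_ocube (l u : Fin d → ℝ) :
    (volume : Measure E) (ocube l u) = ∏ i, ENNReal.ofReal (u i - l i) := by
  rw [ocube, volume_cube fun _ => measurableSet_Ico]
  simp [Real.volume_Ico]

lemma ccube_ae_eq_ocube (l u : Fin d → ℝ) (h : ∀ i, l i ≤ u i) :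
    (ccube l u : Set E) =ᵐ[volume] ocube l u := by
  rw [MeasureTheory.ae_eq_set]
  refine ⟨?_, by rw [Set.diff_eq_empty.2 (ocube_subset_ccube l u)]; simp⟩
  have hne : (volume : Measure E) (ocube l u) ≠ ⊤ := by
    rw [volume_ocube]
    exact (ENNReal.prod_lt_top fun i _ => ENNReal.ofReal_lt_top).ne
  rw [measure_diff (ocube_subset_ccube l u) (measurableSet_ocube l u).nullMeasurableSet hne,
    volume_ccube, volume_ocube, tsub_self]

/-- unit cube at integer offset `k` -/
def kcube (k : Fin d → ℕ) : Set E := ocube (fun i => (k i : ℝ)) (fun i => (k i : ℝ) + 1)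

lemma kcube_disjoint : Pairwise (Function.onFun Disjoint fun k : Fin d → Fin σ =>
    (kcube (fun i => (k i : ℕ)) : Set E)) := by
  intro k k' hkk'
  rw [Function.onFun, Set.disjoint_left]
  rintro x hx hx'
  apply hkk'
  funext i
  have h1 := hx i
  have h2 := hx' i
  simp only [Set.mem_Ico] at h1 h2
  have : ((k i : ℕ) : ℝ) = ((k' i : ℕ) : ℝ) := by
    have a1 : ((k i : ℕ) : ℝ) < ((k' i : ℕ) : ℝ) + 1 := lt_of_le_of_lt h1.1 h2.2
    have a2 : ((k' i : ℕ) : ℝ) < ((k i : ℕ) : ℝ) + 1 := lt_of_le_of_lt h2.1 h1.2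
    have b1 : (k i : ℕ) ≤ (k' i : ℕ) := by exact_mod_cast Nat.lt_succ_iff.mp (by exact_mod_cast a1)
    have b2 : (k' i : ℕ) ≤ (k i : ℕ) := by exact_mod_cast Nat.lt_succ_iff.mp (by exact_mod_cast a2)
    exact_mod_cast le_antisymm b1 b2
  exact Fin.ext (by exact_mod_cast this)

lemma kcube_iUnion {σ : ℕ} (hσ : 0 < σ) :
    (⋃ k : Fin d → Fin σ, kcube fun i => (k i : ℕ)) = (ocube 0 (fun _ => (σ : ℝ)) : Set E) := by
  ext x
  simp only [Set.mem_iUnion]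
  constructor
  · rintro ⟨k, hk⟩ i
    have h := hk i
    simp only [Set.mem_Ico] at h ⊢
    have hkσ : ((k i : ℕ) : ℝ) + 1 ≤ σ := by exact_mod_cast (k i).2
    refine ⟨?_, lt_of_lt_of_le h.2 hkσ⟩
    simp only [Pi.zero_apply]
    exact le_trans (by positivity) h.1
  · intro hx
    have hk : ∀ i, ∃ m : ℕ, m < σ ∧ (m : ℝ) ≤ x i ∧ x i < m + 1 := by
      intro i
      have h := hx i
      simp only [Pi.zero_apply, Set.mem_Ico] at h
      have h0 : (0:ℤ) ≤ ⌊x i⌋ := Int.floor_nonneg.2 h.1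
      have hcast : ((⌊x i⌋.toNat : ℕ) : ℝ) = (⌊x i⌋ : ℝ) := by
        exact_mod_cast congrArg (fun z : ℤ => (z : ℝ)) (Int.toNat_of_nonneg h0)
      refine ⟨⌊x i⌋.toNat, ?_, ?_, ?_⟩
      · have h1 : ((⌊x i⌋.toNat : ℕ) : ℝ) < (σ : ℝ) := by
          rw [hcast]; exact lt_of_le_of_lt (Int.floor_le _) h.2
        exact_mod_cast h1
      · rw [hcast]; exact Int.floor_le _
      · rw [hcast]; exact Int.lt_floor_add_one _
    choose m hm1 hm2 hm3 using hk
    exact ⟨fun i => ⟨m i, hm1 i⟩, fun i => ⟨hm2 i, hm3 i⟩⟩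

lemma mem_kcube_shift (k : Fin d → ℕ) (y : E) :
    y + ι (fun i => (k i : ℝ)) ∈ kcube k ↔ y ∈ (ocube 0 (fun _ => 1) : Set E) := by
  constructor
  · intro hc i
    have h := hc i
    simp only [Set.mem_Ico, PiLp.add_apply, ι_apply] at h
    simp only [Set.mem_Ico, Pi.zero_apply]
    exact ⟨by linarith [h.1], by linarith [h.2]⟩
  · intro hy i
    have h := hy i
    simp only [Set.mem_Ico, Pi.zero_apply] at h
    simp only [Set.mem_Ico, PiLp.add_apply, ι_apply]
    exact ⟨by linarith [h.1], by linarith [h.2]⟩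

lemma integral_kcube_shift (F : E → ℝ) (k : Fin d → ℕ) :
    ∫ x in kcube k, F x = ∫ y in ocube 0 (fun _ => 1), F (y + ι fun i => (k i : ℝ)) := by
  have hm : MeasurableSet (kcube k : Set E) := measurableSet_ocube _ _
  have hm0 := measurableSet_ocube (d := d) 0 (fun _ => 1)
  rw [← integral_indicator hm, ← integral_indicator hm0]
  rw [← integral_add_right_eq_self ((kcube k).indicator F) (ι fun i => (k i : ℝ))]
  congr 1
  funext y
  by_cases hy : y ∈ (ocube 0 (fun _ => 1) : Set E)
  · rw [Set.indicator_of_mem ((mem_kcube_shift k y).2 hy), Set.indicator_of_mem hy]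
  · rw [Set.indicator_of_notMem (fun hc => hy ((mem_kcube_shift k y).1 hc)),
      Set.indicator_of_notMem hy]

lemma smul_mem_ocube {σ : ℕ} (hσ : 0 < σ) (x : E) :
    ((σ:ℝ) • x ∈ (ocube 0 (fun _ => (σ:ℝ)) : Set E)) ↔ x ∈ (ocube 0 (fun _ => 1) : Set E) := by
  have hσR : (0:ℝ) < σ := by exact_mod_cast hσ
  constructor
  · intro h i
    have := h i
    simp only [Set.mem_Ico, PiLp.smul_apply, smul_eq_mul, Pi.zero_apply] at this ⊢
    constructor
    · nlinarith [this.1]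
    · nlinarith [this.2]
  · intro h i
    have := h i
    simp only [Set.mem_Ico, PiLp.smul_apply, smul_eq_mul, Pi.zero_apply] at this ⊢
    constructor
    · nlinarith [this.1]
    · nlinarith [this.2]

lemma integral_unitcube_scale {σ : ℕ} (hσ : 0 < σ) (F : E → ℝ) :
    ∫ x in ocube 0 (fun _ => 1), F ((σ:ℝ) • x)
      = ((σ:ℝ) ^ d)⁻¹ • ∫ y in ocube 0 (fun _ => (σ:ℝ)), F y := by
  have hm := measurableSet_ocube (d := d) 0 (fun _ => (σ:ℝ))
  have hm0 := measurableSet_ocube (d := d) 0 (fun _ => 1)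
  have hσR : (0:ℝ) ≤ σ := by positivity
  have h1 : ∫ x in ocube 0 (fun _ => 1), F ((σ:ℝ) • x)
      = ∫ x, ((ocube 0 (fun _ => (σ:ℝ)) : Set E).indicator F) ((σ:ℝ) • x) := by
    rw [← integral_indicator hm0]
    congr 1
    funext x
    by_cases hx : x ∈ (ocube 0 (fun _ => 1) : Set E)
    · rw [Set.indicator_of_mem hx, Set.indicator_of_mem ((smul_mem_ocube hσ x).2 hx)]
    · rw [Set.indicator_of_notMem hx,
        Set.indicator_of_notMem (fun hc => hx ((smul_mem_ocube hσ x).1 hc))]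
  rw [h1, Measure.integral_comp_smul_of_nonneg volume _ (σ:ℝ) (hR := hσR),
    integral_indicator hm, finrank_euclideanSpace_fin]

lemma integrableOn_ocube {F : E → ℝ} (hF : Continuous F) (l u : Fin d → ℝ) :
    IntegrableOn F (ocube l u) :=
  (hF.continuousOn.integrableOn_compact (isCompact_ccube l u)).mono_set
    (ocube_subset_ccube l u)

lemma norm_le_sqrt_of_mem_unitcube {y : E} (hy : y ∈ (ocube 0 (fun _ => 1) : Set E)) :
    ‖y‖ ≤ Real.sqrt d := by
  rw [EuclideanSpace.norm_eq]
  apply Real.sqrt_le_sqrt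
  calc ∑ i, ‖y i‖ ^ 2 ≤ ∑ _i : Fin d, (1:ℝ) := by
        apply Finset.sum_le_sum
        intro i _
        have h := hy i
        simp only [Set.mem_Ico, Pi.zero_apply] at h
        rw [Real.norm_eq_abs, abs_of_nonneg h.1]
        nlinarith [h.1, h.2]
    _ = d := by simp

lemma key_estimate {h g : E → ℝ} (hh : Continuous h) (hg : Continuous g)
    (hgp : ∀ (x : E) (k : Fin d → ℤ), g (x + ι fun i => (k i : ℝ)) = g x)
    (hgz : ∫ x in ocube 0 (fun _ => 1), g x = 0)
    {K : ℝ} (hK : 0 ≤ K) (hhl : ∀ u v : E, |h u - h v| ≤ K * ‖u - v‖)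
    {σ : ℕ} (hσ : 0 < σ) :
    |∫ x in ocube 0 (fun _ => 1), h x * g ((σ:ℝ) • x)|
      ≤ K * Real.sqrt d / σ * ∫ x in ocube 0 (fun _ => 1), |g x| := by
  have hσR : (0:ℝ) < σ := by exact_mod_cast hσ
  set F : E → ℝ := fun y => h ((σ:ℝ)⁻¹ • y) * g y with hF
  have hFc : Continuous F := (hh.comp (continuous_const_smul _)).mul hg
  -- step 1: scaling
  have h1 : ∫ x in ocube 0 (fun _ => 1), h x * g ((σ:ℝ) • x)
      = ((σ:ℝ) ^ d)⁻¹ • ∫ y in ocube 0 (fun _ => (σ:ℝ)), F y := by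
    rw [← integral_unitcube_scale hσ F]
    apply setIntegral_congr_fun (measurableSet_ocube _ _)
    intro x _
    simp only [hF]
    rw [inv_smul_smul₀ (by positivity)]
  -- step 2: decompose into σ^d unit cubes
  have h2 : ∫ y in ocube 0 (fun _ => (σ:ℝ)), F y
      = ∑ k : Fin d → Fin σ, ∫ y in kcube (fun i => (k i : ℕ)), F y := by
    have hU := kcube_iUnion (d := d) (σ := σ) hσ
    have hInt : IntegrableOn F (⋃ k : Fin d → Fin σ, kcube fun i => (k i : ℕ)) := by
      rw [hU]; exact integrableOn_ocube hFc _ _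
    have h2' := integral_iUnion (μ := volume)
      (s := fun k : Fin d → Fin σ => kcube fun i => (k i : ℕ)) (f := F)
      (fun _ => measurableSet_ocube _ _) kcube_disjoint hInt
    rw [hU] at h2'
    rw [h2', tsum_fintype]
  -- step 3: per-cube estimate
  have h3 : ∀ k : Fin d → Fin σ, |∫ y in kcube (fun i => (k i : ℕ)), F y|
      ≤ K * Real.sqrt d / σ * ∫ x in ocube 0 (fun _ => 1), |g x| := by
    intro k
    rw [integral_kcube_shift]
    have hper : ∀ y : E, F (y + ι fun i => ((k i : ℕ) : ℝ))
        = h ((σ:ℝ)⁻¹ • (y + ι fun i => ((k i : ℕ) : ℝ))) * g y := by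
      intro y
      simp only [hF]
      congr 1
      exact hgp y (fun i => ((k i : ℕ) : ℤ))
    rw [show (∫ y in ocube 0 (fun _ => 1), F (y + ι fun i => ((k i : ℕ) : ℝ)))
        = ∫ y in ocube 0 (fun _ => 1),
            h ((σ:ℝ)⁻¹ • (y + ι fun i => ((k i : ℕ) : ℝ))) * g y from
      setIntegral_congr_fun (measurableSet_ocube _ _) fun y _ => hper y]
    set c : ℝ := h ((σ:ℝ)⁻¹ • ι fun i => ((k i : ℕ) : ℝ)) with hc
    have int1 : IntegrableOn
        (fun y : E => h ((σ:ℝ)⁻¹ • (y + ι fun i => ((k i : ℕ) : ℝ))) * g y)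
        (ocube 0 (fun _ => 1)) :=
      integrableOn_ocube
        (((hh.comp (continuous_const_smul _)).comp (continuous_add_right _)).mul hg) _ _
    have int2 : IntegrableOn (fun y : E => c * g y) (ocube 0 (fun _ => 1)) :=
      (integrableOn_ocube hg _ _).const_mul c
    have hsub : ∫ y in ocube 0 (fun _ => 1),
        (h ((σ:ℝ)⁻¹ • (y + ι fun i => ((k i : ℕ) : ℝ))) - c) * g y
        = ∫ y in ocube 0 (fun _ => 1),
            h ((σ:ℝ)⁻¹ • (y + ι fun i => ((k i : ℕ) : ℝ))) * g y := by
      simp only [sub_mul]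
      rw [integral_sub int1 int2, integral_const_mul, hgz, mul_zero, sub_zero]
    rw [← hsub]
    have hbound : ∀ y ∈ (ocube 0 (fun _ => 1) : Set E),
        |(h ((σ:ℝ)⁻¹ • (y + ι fun i => ((k i : ℕ) : ℝ))) - c) * g y|
          ≤ K * Real.sqrt d / σ * |g y| := by
      intro y hy
      rw [abs_mul]
      apply mul_le_mul_of_nonneg_right _ (abs_nonneg _)
      calc |h ((σ:ℝ)⁻¹ • (y + ι fun i => ((k i : ℕ) : ℝ))) - c|
          ≤ K * ‖(σ:ℝ)⁻¹ • (y + ι fun i => ((k i : ℕ) : ℝ))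
              - (σ:ℝ)⁻¹ • ι (fun i => ((k i : ℕ) : ℝ))‖ := hhl _ _
        _ = K * ((σ:ℝ)⁻¹ * ‖y‖) := by
            rw [← smul_sub, add_sub_cancel_right, norm_smul, Real.norm_eq_abs,
              abs_of_nonneg (by positivity)]
        _ ≤ K * ((σ:ℝ)⁻¹ * Real.sqrt d) := by
            apply mul_le_mul_of_nonneg_left _ hK
            exact mul_le_mul_of_nonneg_left (norm_le_sqrt_of_mem_unitcube hy) (by positivity)
        _ = K * Real.sqrt d / σ := by rw [div_eq_mul_inv]; ring
    calc |∫ y in ocube 0 (fun _ => 1),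
          (h ((σ:ℝ)⁻¹ • (y + ι fun i => ((k i : ℕ) : ℝ))) - c) * g y|
        ≤ ∫ y in ocube 0 (fun _ => 1),
            |(h ((σ:ℝ)⁻¹ • (y + ι fun i => ((k i : ℕ) : ℝ))) - c) * g y| :=
          by
            have hn := norm_integral_le_integral_norm
              (μ := volume.restrict (ocube 0 (fun _ => (1:ℝ)) : Set E)) (fun y : E =>
                (h ((σ:ℝ)⁻¹ • (y + ι fun i => ((k i : ℕ) : ℝ))) - c) * g y)
            simpa [Real.norm_eq_abs, abs_mul] using hn
      _ ≤ ∫ y in ocube 0 (fun _ => 1), K * Real.sqrt d / σ * |g y| := by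
          apply setIntegral_mono_on
          · exact (integrableOn_ocube
              ((((hh.comp (continuous_const_smul _)).comp (continuous_add_right _)).sub
                continuous_const).mul hg) _ _).abs
          · exact ((integrableOn_ocube hg _ _).abs).const_mul _
          · exact measurableSet_ocube _ _
          · exact hbound
      _ = K * Real.sqrt d / σ * ∫ x in ocube 0 (fun _ => 1), |g x| := integral_const_mul _ _
  -- assemble
  rw [h1, h2]
  have hcard : (Fintype.card (Fin d → Fin σ) : ℝ) = (σ:ℝ) ^ d := by
    simp [Fintype.card_fun]
  calc |((σ:ℝ) ^ d)⁻¹ • ∑ k : Fin d → Fin σ, ∫ y in kcube (fun i => (k i : ℕ)), F y|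
      = ((σ:ℝ) ^ d)⁻¹ * |∑ k : Fin d → Fin σ, ∫ y in kcube (fun i => (k i : ℕ)), F y| := by
        rw [smul_eq_mul, abs_mul, abs_of_nonneg (by positivity)]
    _ ≤ ((σ:ℝ) ^ d)⁻¹ * ∑ k : Fin d → Fin σ,
          |∫ y in kcube (fun i => (k i : ℕ)), F y| := by
        apply mul_le_mul_of_nonneg_left (Finset.abs_sum_le_sum_abs _ _) (by positivity)
    _ ≤ ((σ:ℝ) ^ d)⁻¹ * ∑ _k : Fin d → Fin σ,
          (K * Real.sqrt d / σ * ∫ x in ocube 0 (fun _ => 1), |g x|) := by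
        apply mul_le_mul_of_nonneg_left (Finset.sum_le_sum fun k _ => h3 k) (by positivity)
    _ = K * Real.sqrt d / σ * ∫ x in ocube 0 (fun _ => 1), |g x| := by
        rw [Finset.sum_const, Finset.card_univ, nsmul_eq_mul, hcard]
        field_simp

lemma QD_eq_ccube : QD d = ccube (0 : Fin d → ℝ) (fun _ => 1) := rfl

lemma isCompact_QD : IsCompact (QD d) := isCompact_ccube _ _

lemma volume_QD : (volume : Measure E) (QD d) = 1 := by
  rw [QD_eq_ccube, volume_ccube]; simp

lemma QD_ae_eq : (QD d : Set E) =ᵐ[volume] ocube 0 (fun _ => 1) := by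
  rw [QD_eq_ccube]
  exact ccube_ae_eq_ocube _ _ (fun _ => zero_le_one)

lemma setIntegral_QD_eq (φ : E → ℝ) :
    ∫ x in QD d, φ x = ∫ x in ocube 0 (fun _ => 1), φ x :=
  setIntegral_congr_set QD_ae_eq

/-- range of a periodic function is bounded above -/
lemma periodic_bddAbove {F : E → ℝ} (hF : Continuous F)
    (hp : ∀ (x : E) (k : Fin d → ℤ), F (x + ι fun i => (k i : ℝ)) = F x) :
    BddAbove (Set.range F) := by
  have hsub : Set.range F ⊆ F '' QD d := by
    rintro _ ⟨x, rfl⟩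
    refine ⟨x + ι fun i => ((-⌊x i⌋ : ℤ) : ℝ), ?_, (hp x fun i => -⌊x i⌋)⟩
    intro i
    have : (x + ι fun i => ((-⌊x i⌋ : ℤ) : ℝ)) i = x i - ⌊x i⌋ := by
      simp [sub_eq_add_neg]
    rw [this]
    constructor
    · linarith [Int.floor_le (x i)]
    · linarith [Int.lt_floor_add_one (x i)]
  exact BddAbove.mono hsub ((isCompact_QD.image hF).bddAbove)

lemma fderiv_periodic {a : E → ℝ} (ha : ContDiff ℝ (⊤ : ℕ∞) a) (hap : PeriodicD a) :
    ∀ (x : E) (k : Fin d → ℤ),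
      fderiv ℝ a (x + ι fun i => (k i : ℝ)) = fderiv ℝ a x := by
  intro x k
  set v : E := ι fun i => (k i : ℝ) with hv
  have hdiff : Differentiable ℝ a := ha.differentiable (by simp)
  have h1 : HasFDerivAt (fun y : E => a (y + v)) (fderiv ℝ a (x + v)) x := by
    have := (hdiff (x + v)).hasFDerivAt.comp x ((hasFDerivAt_id x).add_const v)
    simp at this; exact this
  have h2 : (fun y : E => a (y + v)) = a := funext fun y => hap y k
  rw [h2] at h1
  exact h1.fderiv.symm

end ImpHolder

open ImpHolder

/-- Improved Hölder inequality on `𝕋^d` (Modena–Székelyhidi):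
`| ‖a f(σ·)‖_{Lʳ} − ‖a‖_{Lʳ}‖f‖_{Lʳ} | ≤ C σ^{−1/r} ‖a‖_{C¹} ‖f‖_{Lʳ}`. -/
theorem improved_holder (d : ℕ) (hd : 2 ≤ d) :
    ∃ C : ℝ, 0 < C ∧ ∀ r : ℝ, 1 ≤ r →
      ∀ a f : EuclideanSpace ℝ (Fin d) → ℝ,
        ContDiff ℝ (⊤ : ℕ∞) a → PeriodicD a → ContDiff ℝ (⊤ : ℕ∞) f → PeriodicD f →
        ∀ σ : ℕ, 0 < σ →
          |(eLpNorm (fun x => a x * f ((σ : ℝ) • x)) (ENNReal.ofReal r) (μTD d)).toReal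
            - (eLpNorm a (ENNReal.ofReal r) (μTD d)).toReal
              * (eLpNorm f (ENNReal.ofReal r) (μTD d)).toReal|
          ≤ C * (σ : ℝ) ^ (-(1/r)) * C1NormD a
            * (eLpNorm f (ENNReal.ofReal r) (μTD d)).toReal := by
  classical
  refine ⟨2 * Real.sqrt d + 3, by positivity, ?_⟩
  intro r hr a f ha hap hf hfp σ hσ
  set C : ℝ := 2 * Real.sqrt d + 3 with hCdef
  have hsd : (0:ℝ) ≤ Real.sqrt d := Real.sqrt_nonneg _
  have hC3 : (3:ℝ) ≤ C := by rw [hCdef]; linarith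
  have hC0 : (0:ℝ) < C := by linarith
  have hr0 : (0:ℝ) < r := by linarith
  have hrne : r ≠ 0 := ne_of_gt hr0
  have hσR : (0:ℝ) < σ := by exact_mod_cast hσ
  haveI : IsFiniteMeasure (μTD d) := by
    constructor
    rw [μTD, Measure.restrict_apply_univ, volume_QD]
    exact ENNReal.one_lt_top
  have hac : Continuous a := ha.continuous
  have hfc : Continuous f := hf.continuous
  -- suprema
  set M : ℝ := ⨆ x, |a x| with hMdef
  set L : ℝ := ⨆ x, ‖fderiv ℝ a x‖ with hLdef
  have hC1 : C1NormD a = M + L := rfl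
  have hMb : BddAbove (Set.range fun x : EuclideanSpace ℝ (Fin d) => |a x|) :=
    periodic_bddAbove (continuous_abs.comp hac) (fun x k => congrArg abs (hap x k))
  have hMx : ∀ x, |a x| ≤ M := fun x => le_ciSup hMb x
  have hM0 : (0:ℝ) ≤ M := le_trans (abs_nonneg _) (hMx 0)
  have hLb : BddAbove (Set.range fun x : EuclideanSpace ℝ (Fin d) => ‖fderiv ℝ a x‖) :=
    periodic_bddAbove ((ha.continuous_fderiv (by simp)).norm)
      (fun x k => congrArg norm (fderiv_periodic ha hap x k))
  have hLx : ∀ x, ‖fderiv ℝ a x‖ ≤ L := fun x => le_ciSup hLb x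
  have hL0 : (0:ℝ) ≤ L := le_trans (norm_nonneg _) (hLx 0)
  have hML0 : (0:ℝ) ≤ M + L := by linarith
  have hlip : ∀ u v : EuclideanSpace ℝ (Fin d), |a u - a v| ≤ L * ‖u - v‖ := by
    intro u v
    have := convex_univ.norm_image_sub_le_of_norm_fderiv_le
      (f := a) (C := L) (fun x _ => (ha.differentiable (by simp)).differentiableAt)
      (fun x _ => hLx x) (Set.mem_univ v) (Set.mem_univ u)
    simpa [Real.norm_eq_abs] using this
  set Mf : ℝ := ⨆ x, |f x| with hMfdef
  have hMfb : BddAbove (Set.range fun x : EuclideanSpace ℝ (Fin d) => |f x|) :=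
    periodic_bddAbove (continuous_abs.comp hfc) (fun x k => congrArg abs (hfp x k))
  have hMfx : ∀ x, |f x| ≤ Mf := fun x => le_ciSup hMfb x
  -- p
  set p : ℝ≥0∞ := ENNReal.ofReal r with hpdef
  have hp0 : p ≠ 0 := (ENNReal.ofReal_pos.2 hr0).ne'
  have hpt : p ≠ ⊤ := ENNReal.ofReal_ne_top
  have hpr : p.toReal = r := ENNReal.toReal_ofReal hr0.le
  -- memℒp
  have hmem : ∀ φ : EuclideanSpace ℝ (Fin d) → ℝ, Continuous φ → (∃ Cφ, ∀ x, |φ x| ≤ Cφ) →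
      MemLp φ p (μTD d) := by
    rintro φ hφ ⟨Cφ, hCφ⟩
    exact MemLp.of_bound hφ.aestronglyMeasurable Cφ (ae_of_all _ fun x => by
      rw [Real.norm_eq_abs]; exact hCφ x)
  have hmem1 : MemLp (fun x => a x * f ((σ:ℝ) • x)) p (μTD d) :=
    hmem _ (hac.mul (hfc.comp (continuous_const_smul _)))
      ⟨M * Mf, fun x => by
        rw [abs_mul]
        exact mul_le_mul (hMx x) (hMfx _) (abs_nonneg _) hM0⟩
  have hmem2 : MemLp a p (μTD d) := hmem a hac ⟨M, hMx⟩
  have hmem3 : MemLp f p (μTD d) := hmem f hfc ⟨Mf, hMfx⟩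
  -- conversion
  have conv : ∀ φ : EuclideanSpace ℝ (Fin d) → ℝ, MemLp φ p (μTD d) →
      (eLpNorm φ p (μTD d)).toReal = (∫ x, |φ x| ^ r ∂(μTD d)) ^ r⁻¹ := by
    intro φ hφ
    rw [hφ.eLpNorm_eq_integral_rpow_norm hp0 hpt]
    have hi : (∫ x, ‖φ x‖ ^ p.toReal ∂(μTD d)) = ∫ x, |φ x| ^ r ∂(μTD d) := by
      rw [hpr]
      simp only [Real.norm_eq_abs]
    rw [hi, hpr]
    exact ENNReal.toReal_ofReal (Real.rpow_nonneg
      (integral_nonneg fun x => Real.rpow_nonneg (abs_nonneg _) _) _)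
  set Iaf : ℝ := ∫ x, |a x * f ((σ:ℝ) • x)| ^ r ∂(μTD d) with hIafdef
  set Ia : ℝ := ∫ x, |a x| ^ r ∂(μTD d) with hIadef
  set If : ℝ := ∫ x, |f x| ^ r ∂(μTD d) with hIfdef
  have hIaf0 : 0 ≤ Iaf := integral_nonneg fun x => Real.rpow_nonneg (abs_nonneg _) _
  have hIa0 : 0 ≤ Ia := integral_nonneg fun x => Real.rpow_nonneg (abs_nonneg _) _
  have hIf0 : 0 ≤ If := integral_nonneg fun x => Real.rpow_nonneg (abs_nonneg _) _
  rw [conv _ hmem1, conv _ hmem2, conv _ hmem3, hC1]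
  set X : ℝ := Iaf ^ r⁻¹ with hXdef
  set A : ℝ := Ia ^ r⁻¹ with hAdef
  set B : ℝ := If ^ r⁻¹ with hBdef
  have hX0 : 0 ≤ X := Real.rpow_nonneg hIaf0 _
  have hA0 : 0 ≤ A := Real.rpow_nonneg hIa0 _
  have hB0 : 0 ≤ B := Real.rpow_nonneg hIf0 _
  have hXr : X ^ r = Iaf := by
    rw [hXdef, ← Real.rpow_mul hIaf0, inv_mul_cancel₀ hrne, Real.rpow_one]
  have hAr : A ^ r = Ia := by
    rw [hAdef, ← Real.rpow_mul hIa0, inv_mul_cancel₀ hrne, Real.rpow_one]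
  have hBr : B ^ r = If := by
    rw [hBdef, ← Real.rpow_mul hIf0, inv_mul_cancel₀ hrne, Real.rpow_one]
  -- transfer integrals to the open cube
  have hQDo : ∀ ψ : EuclideanSpace ℝ (Fin d) → ℝ,
      (∫ x, ψ x ∂(μTD d)) = ∫ x in ocube 0 (fun _ => 1), ψ x := by
    intro ψ
    rw [μTD]
    exact setIntegral_QD_eq ψ
  -- h and g
  set h : EuclideanSpace ℝ (Fin d) → ℝ := fun x => |a x| ^ r with hhdef
  set g : EuclideanSpace ℝ (Fin d) → ℝ := fun y => |f y| ^ r - If with hgdef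
  have hrpow_cont : ∀ {φ : EuclideanSpace ℝ (Fin d) → ℝ}, Continuous φ →
      Continuous fun x => |φ x| ^ r := fun hφ =>
    (continuous_abs.comp hφ).rpow_const (fun x => Or.inr hr0.le)
  have hcont_h : Continuous h := hrpow_cont hac
  have hcont_g : Continuous g := (hrpow_cont hfc).sub continuous_const
  have hvol1 : (volume (ocube (0 : Fin d → ℝ) (fun _ => 1))).toReal = 1 := by
    rw [volume_ocube]; simp
  have hIf_oc : ∫ x in ocube 0 (fun _ => 1), |f x| ^ r = If := (hQDo _).symm
  have hgz : ∫ x in ocube 0 (fun _ => 1), g x = 0 := by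
    rw [hgdef]
    rw [integral_sub (integrableOn_ocube (hrpow_cont hfc) _ _)
      (integrableOn_const ?_)]
    · rw [hIf_oc, setIntegral_const, measureReal_def, hvol1, one_smul, sub_self]
    · rw [volume_ocube]; simp
  have hgper : ∀ (x : EuclideanSpace ℝ (Fin d)) (k : Fin d → ℤ),
      g (x + ImpHolder.ι fun i => (k i : ℝ)) = g x := by
    intro x k
    exact congrArg (fun t => |t| ^ r - If) (hfp x k)
  set K : ℝ := r * M ^ (r - 1) * L with hKdef
  have hMr0 : (0:ℝ) ≤ M ^ (r - 1) := Real.rpow_nonneg hM0 _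
  have hK0 : 0 ≤ K := by
    rw [hKdef]
    exact mul_nonneg (mul_nonneg hr0.le hMr0) hL0
  have hhl : ∀ u v : EuclideanSpace ℝ (Fin d), |h u - h v| ≤ K * ‖u - v‖ := by
    intro u v
    calc |h u - h v| ≤ r * M ^ (r - 1) * |(|a u| - |a v|)| :=
          lip_rpow hr ⟨abs_nonneg _, hMx u⟩ ⟨abs_nonneg _, hMx v⟩
      _ ≤ r * M ^ (r - 1) * |a u - a v| :=
          mul_le_mul_of_nonneg_left (abs_abs_sub_abs_le_abs_sub _ _)
            (mul_nonneg hr0.le hMr0)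
      _ ≤ r * M ^ (r - 1) * (L * ‖u - v‖) :=
          mul_le_mul_of_nonneg_left (hlip u v) (mul_nonneg hr0.le hMr0)
      _ = K * ‖u - v‖ := by rw [hKdef]; ring
  have hkey := key_estimate hcont_h hcont_g hgper hgz hK0 hhl hσ
  -- identity
  have int_hf : IntegrableOn (fun x => h x * |f ((σ:ℝ) • x)| ^ r)
      (ocube 0 (fun _ => 1)) (volume) :=
    integrableOn_ocube (hcont_h.mul (hrpow_cont (hfc.comp (continuous_const_smul _)))) _ _
  have int_h : IntegrableOn h (ocube 0 (fun _ => 1)) (volume) :=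
    integrableOn_ocube hcont_h _ _
  have hkeyid : ∫ x in ocube 0 (fun _ => 1), h x * g ((σ:ℝ) • x) = Iaf - Ia * If := by
    have e0 : (fun x : EuclideanSpace ℝ (Fin d) => h x * g ((σ:ℝ) • x))
        = fun x => h x * |f ((σ:ℝ) • x)| ^ r - If * h x := by
      funext x
      have h1 : h x = |a x| ^ r := rfl
      have h2 : g ((σ:ℝ) • x) = |f ((σ:ℝ) • x)| ^ r - If := rfl
      rw [h1, h2]
      ring
    rw [e0, integral_sub int_hf (int_h.const_mul If), integral_const_mul]
    have e1 : ∫ x in ocube 0 (fun _ => 1), h x * |f ((σ:ℝ) • x)| ^ r = Iaf := by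
      rw [hIafdef, hQDo]
      apply setIntegral_congr_fun (measurableSet_ocube _ _)
      intro x _
      show h x * |f ((σ:ℝ) • x)| ^ r = |a x * f ((σ:ℝ) • x)| ^ r
      rw [show h x = |a x| ^ r from rfl, abs_mul,
        Real.mul_rpow (abs_nonneg _) (abs_nonneg _)]
    have e2 : ∫ x in ocube 0 (fun _ => 1), h x = Ia := (hQDo _).symm
    rw [e1, e2]
    ring
  -- bound on ∫ |g|
  have habsg : ∫ x in ocube 0 (fun _ => 1), |g x| ≤ 2 * If := by
    have hb : ∀ y ∈ (ocube (0 : Fin d → ℝ) (fun _ => 1)), |g y| ≤ |f y| ^ r + If := by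
      intro y _
      have hgy : g y = |f y| ^ r - If := rfl
      rw [hgy]
      have h1 : (0:ℝ) ≤ |f y| ^ r := Real.rpow_nonneg (abs_nonneg _) _
      rw [abs_le]
      exact ⟨by linarith, by linarith⟩
    calc ∫ x in ocube 0 (fun _ => 1), |g x|
        ≤ ∫ x in ocube 0 (fun _ => 1), (|f x| ^ r + If) := by
          apply setIntegral_mono_on ((integrableOn_ocube hcont_g _ _).abs)
            ((integrableOn_ocube (hrpow_cont hfc) _ _).add
              (integrableOn_const (by rw [volume_ocube]; simp)))
            (measurableSet_ocube _ _) hb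
      _ = 2 * If := by
          rw [integral_add (integrableOn_ocube (hrpow_cont hfc) _ _)
            (integrableOn_const (by rw [volume_ocube]; simp)),
            hIf_oc, setIntegral_const, measureReal_def, hvol1, one_smul]
          ring
  have hbound : |Iaf - Ia * If| ≤ K * Real.sqrt d / σ * (2 * If) := by
    rw [← hkeyid]
    exact le_trans hkey (mul_le_mul_of_nonneg_left habsg (by positivity))
  -- rpow arithmetic for the constant
  have hMLpow : M ^ (r - 1) * L ≤ (M + L) ^ r := by
    rcases eq_or_lt_of_le hML0 with heq | hpos
    · have hLz : L = 0 := by linarith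
      rw [hLz, mul_zero]
      exact Real.rpow_nonneg (by linarith) _
    · calc M ^ (r - 1) * L ≤ (M + L) ^ (r - 1) * (M + L) :=
            mul_le_mul (Real.rpow_le_rpow hM0 (by linarith) (by linarith))
              (by linarith) hL0 (Real.rpow_nonneg hML0 _)
        _ = (M + L) ^ r := by
            rw [← Real.rpow_add_one (ne_of_gt hpos) (r - 1)]
            norm_num
  have hlog3 : (1:ℝ) ≤ Real.log 3 := by
    rw [Real.le_log_iff_exp_le (by norm_num)]
    exact le_trans Real.exp_one_lt_d9.le (by norm_num)
  have h3r : r ≤ (3:ℝ) ^ (r - 1) := by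
    rw [Real.rpow_def_of_pos (by norm_num : (0:ℝ) < 3)]
    calc r = (r - 1) + 1 := by ring
      _ ≤ Real.exp (r - 1) := Real.add_one_le_exp _
      _ ≤ Real.exp (Real.log 3 * (r - 1)) := by
          apply Real.exp_le_exp.2
          nlinarith
  have hCr : 2 * Real.sqrt d * r ≤ C ^ r := by
    have hCr1 : (3:ℝ) ^ (r - 1) ≤ C ^ (r - 1) :=
      Real.rpow_le_rpow (by norm_num) hC3 (by linarith)
    calc 2 * Real.sqrt d * r ≤ C * r := by nlinarith
      _ ≤ C * (3:ℝ) ^ (r - 1) := mul_le_mul_of_nonneg_left h3r hC0.le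
      _ ≤ C * C ^ (r - 1) := mul_le_mul_of_nonneg_left hCr1 hC0.le
      _ = C ^ r := by
          rw [mul_comm, ← Real.rpow_add_one (ne_of_gt hC0) (r - 1)]
          norm_num
  -- RHS to the r
  have hs0 : (0:ℝ) ≤ (σ:ℝ) ^ (-(1/r)) := Real.rpow_nonneg hσR.le _
  set RHS : ℝ := C * (σ:ℝ) ^ (-(1/r)) * (M + L) * B with hRHSdef
  have hRHS0 : 0 ≤ RHS := by
    rw [hRHSdef]
    exact mul_nonneg (mul_nonneg (mul_nonneg hC0.le hs0) hML0) hB0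
  have hsr : ((σ:ℝ) ^ (-(1/r))) ^ r = (σ:ℝ)⁻¹ := by
    rw [← Real.rpow_mul hσR.le, neg_mul, one_div, inv_mul_cancel₀ hrne,
      Real.rpow_neg_one]
  have hRHSr : RHS ^ r = C ^ r * (σ:ℝ)⁻¹ * (M + L) ^ r * If := by
    rw [hRHSdef, Real.mul_rpow (mul_nonneg (mul_nonneg hC0.le hs0) hML0) hB0,
      Real.mul_rpow (mul_nonneg hC0.le hs0) hML0,
      Real.mul_rpow hC0.le hs0, hsr, hBr]
  have hfac : 2 * Real.sqrt d * r * (M ^ (r - 1) * L) ≤ C ^ r * (M + L) ^ r :=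
    mul_le_mul hCr hMLpow (mul_nonneg hMr0 hL0)
      (Real.rpow_nonneg hC0.le _)
  have hDRH : K * Real.sqrt d / σ * (2 * If) ≤ RHS ^ r := by
    calc K * Real.sqrt d / σ * (2 * If)
        = (2 * Real.sqrt d * r * (M ^ (r - 1) * L)) * (If * (σ:ℝ)⁻¹) := by
          rw [hKdef]; field_simp
      _ ≤ (C ^ r * (M + L) ^ r) * (If * (σ:ℝ)⁻¹) :=
          mul_le_mul_of_nonneg_right hfac (by positivity)
      _ = RHS ^ r := by rw [hRHSr]; ring
  -- conclude
  have hstep : |X - A * B| ^ r ≤ RHS ^ r := by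
    calc |X - A * B| ^ r ≤ |X ^ r - (A * B) ^ r| :=
          abs_sub_rpow_le hr hX0 (mul_nonneg hA0 hB0)
      _ = |Iaf - Ia * If| := by
          rw [hXr, Real.mul_rpow hA0 hB0, hAr, hBr]
      _ ≤ K * Real.sqrt d / σ * (2 * If) := hbound
      _ ≤ RHS ^ r := hDRH
  have hfinal : |X - A * B| ≤ RHS := by
    have hmono := Real.rpow_le_rpow (Real.rpow_nonneg (abs_nonneg _) _) hstep
      (inv_nonneg.2 hr0.le)
    rwa [← Real.rpow_mul (abs_nonneg _), mul_inv_cancel₀ hrne, Real.rpow_one,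
      ← Real.rpow_mul hRHS0, mul_inv_cancel₀ hrne, Real.rpow_one] at hmono
  exact hfinal
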